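/- Let A(λ, x) = x² ∂²Ĉ/∂x²(λ, x) = x λ^{−1/2} φ(d(λ, x)). There exists a constant C > 0 (depending only on K) such that for all λ > 0, x > 0 and z > −1: | ∫_λ^∞ ( A(v, x(1+z)) − A(v, x) ) dv | ≤ C x^{1/2} ϖ(z) ∫_λ^∞ (1 + v^{−1}) e^{−v/8} dv, where ϖ(z) = z·1_{{z>0}} + (1+z)^{−1/2}·1_{{−1<z≤0}} + 1 (all integrals being absolutely convergent). -/

import Mathlib

/-! The substitution `L = log (x / K)` turns the Gaussian exponent into
`-(L/√v + √v/2)² / 2 = -L²/(2v) - L/2 - v/8`, and `x e^{-L/2} = √(K x)`.  Dropping the factor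
`e^{-L²/(2v)} ≤ 1` gives `A(v, x) ≤ (2π)^{-1/2} √K √x v^{-1/2} e^{-v/8}`, uniformly in the
moneyness.  No cancellation between the two terms of the jump is needed: bounding each separately,
`√(x(1+z)) + √x ≤ 2 √x ϖ(z)`, and `v^{-1/2} ≤ 1 + v⁻¹` makes the bound integrable at `0` and `∞`. -/

open MeasureTheory

/-- Standard normal density φ(a) = (2π)^{−1/2} e^{−a²/2}. -/
noncomputable def stdNormalPdf (a : ℝ) : ℝ :=
  (Real.sqrt (2 * Real.pi))⁻¹ * Real.exp (-(a ^ 2) / 2)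

/-- Standard normal distribution function Φ(a) = ∫_{−∞}^a φ(s) ds. -/
noncomputable def stdNormalCdf (a : ℝ) : ℝ :=
  ∫ s in Set.Iio a, stdNormalPdf s

/-- d(λ, x) = ln(x/K)/√λ + √λ/2. -/
noncomputable def bsD (K lam x : ℝ) : ℝ :=
  Real.log (x / K) / Real.sqrt lam + Real.sqrt lam / 2

/-- Black–Scholes call price with strike K, zero interest rate and total
remaining variance λ: Ĉ(λ, x) = x Φ(d(λ, x)) − K Φ(d(λ, x) − √λ). -/
noncomputable def bsPrice (K lam x : ℝ) : ℝ :=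
  x * stdNormalCdf (bsD K lam x) - K * stdNormalCdf (bsD K lam x - Real.sqrt lam)

/-- A(λ, x) = x² ∂²Ĉ/∂x²(λ, x) = x λ^{−1/2} φ(d(λ, x)). -/
noncomputable def bsA (K lam x : ℝ) : ℝ :=
  x * (Real.sqrt lam)⁻¹ * stdNormalPdf (bsD K lam x)

/-- ϖ(z) = z·1_{z>0} + (1+z)^{−1/2}·1_{−1<z≤0} + 1. -/
noncomputable def varpi (z : ℝ) : ℝ :=
  (if 0 < z then z else 0)
    + (if -1 < z ∧ z ≤ 0 then (1 + z) ^ (-(1 / 2) : ℝ) else 0) + 1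

open Real

lemma neg_sq_bsD_div_two (K : ℝ) {v : ℝ} (hv : 0 < v) (x : ℝ) :
    -bsD K v x ^ 2 / 2 = -log (x / K) ^ 2 / (2 * v) + -log (x / K) / 2 + -v / 8 := by
  have hsqrt : √v ^ 2 = v := sq_sqrt hv.le
  have hsqrt_ne : √v ≠ 0 := (sqrt_pos.mpr hv).ne'
  unfold bsD
  field_simp
  rw [hsqrt]
  ring

lemma mul_exp_neg_log_div_div_two {K x : ℝ} (hK : 0 < K) (hx : 0 < x) :
    x * exp (-log (x / K) / 2) = √K * √x := by
  have hlog : -log (x / K) / 2 = log √(K / x) := by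
    rw [log_sqrt (by positivity), log_div hK.ne' hx.ne', log_div hx.ne' hK.ne']
    ring
  rw [hlog, exp_log (by positivity), sqrt_div' _ hx.le]
  field_simp
  rw [sq_sqrt hx.le]

lemma bsA_eq {K v x : ℝ} (hK : 0 < K) (hv : 0 < v) (hx : 0 < x) :
    bsA K v x = (√(2 * π))⁻¹ * √K * √x
      * ((√v)⁻¹ * exp (-log (x / K) ^ 2 / (2 * v)) * exp (-v / 8)) := by
  unfold bsA stdNormalPdf
  rw [neg_sq_bsD_div_two K hv, exp_add, exp_add]
  linear_combination (√(2 * π))⁻¹ * (√v)⁻¹ * exp (-log (x / K) ^ 2 / (2 * v)) * exp (-v / 8)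
    * mul_exp_neg_log_div_div_two hK hx

lemma bsA_nonneg (K : ℝ) {v x : ℝ} (hx : 0 ≤ x) : 0 ≤ bsA K v x := by
  unfold bsA stdNormalPdf
  positivity

lemma inv_sqrt_le_one_add_inv {v : ℝ} (hv : 0 < v) : (√v)⁻¹ ≤ 1 + v⁻¹ := by
  rcases le_total 1 v with h | h
  · have : (√v)⁻¹ ≤ 1 := inv_le_one_of_one_le₀ (one_le_sqrt.mpr h)
    linarith [inv_pos.mpr hv]
  · have : (√v)⁻¹ ≤ v⁻¹ := by
      gcongr
      exact le_sqrt_self_iff.mpr h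
    linarith

lemma bsA_le {K v x : ℝ} (hK : 0 < K) (hv : 0 < v) (hx : 0 < x) :
    bsA K v x ≤ (√(2 * π))⁻¹ * √K * √x * ((1 + v⁻¹) * exp (-v / 8)) := by
  rw [bsA_eq hK hv hx]
  have hgauss : exp (-log (x / K) ^ 2 / (2 * v)) ≤ 1 :=
    exp_le_one_iff.mpr (div_nonpos_of_nonpos_of_nonneg (by nlinarith) (by positivity))
  gcongr
  calc (√v)⁻¹ * exp (-log (x / K) ^ 2 / (2 * v)) ≤ (√v)⁻¹ * 1 := by gcongr
    _ ≤ 1 + v⁻¹ := by rw [mul_one]; exact inv_sqrt_le_one_add_inv hv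

lemma continuousOn_bsA (K x : ℝ) : ContinuousOn (fun v => bsA K v x) (Set.Ioi 0) := by
  have hsqrt_ne : ∀ v ∈ Set.Ioi (0 : ℝ), √v ≠ 0 := fun v hv => (sqrt_pos.mpr hv).ne'
  unfold bsA stdNormalPdf bsD
  fun_prop (disch := assumption)

lemma integrableOn_one_add_inv_mul_exp_neg_div {lam c : ℝ} (hlam : 0 < lam) (hc : 0 < c) :
    IntegrableOn (fun v => (1 + v⁻¹) * exp (-v / c)) (Set.Ioi lam) := by
  have hexp : IntegrableOn (fun v => (1 + lam⁻¹) * exp (-c⁻¹ * v)) (Set.Ioi lam) :=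
    (exp_neg_integrableOn_Ioi lam (inv_pos.mpr hc)).const_mul _
  refine hexp.mono' ?_ ((ae_restrict_mem measurableSet_Ioi).mono fun v hv => ?_)
  · refine ContinuousOn.aestronglyMeasurable ?_ measurableSet_Ioi
    have : ∀ v ∈ Set.Ioi lam, v ≠ 0 := fun v hv => (hlam.trans hv).ne'
    fun_prop (disch := assumption)
  · have hv0 : 0 < v := hlam.trans hv
    rw [norm_of_nonneg (by positivity), neg_div, div_eq_inv_mul, ← neg_mul]
    gcongr
    exact hv.le

lemma one_le_varpi {z : ℝ} (hz : -1 < z) : 1 ≤ varpi z := by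
  unfold varpi
  have := rpow_nonneg (by linarith : (0 : ℝ) ≤ 1 + z) (-(1 / 2))
  split_ifs <;> linarith

lemma sqrt_one_add_le_varpi {z : ℝ} (hz : -1 < z) : √(1 + z) ≤ varpi z := by
  unfold varpi
  rcases le_or_gt z 0 with h | h
  · rw [if_neg h.not_gt, if_pos ⟨hz, h⟩]
    have := rpow_nonneg (by linarith : (0 : ℝ) ≤ 1 + z) (-(1 / 2))
    have : √(1 + z) ≤ 1 := sqrt_le_one.mpr (by linarith)
    linarith
  · rw [if_pos h, if_neg fun h' => h.not_ge h'.2]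
    have : √(1 + z) ≤ 1 + z := sqrt_le_self_iff.mpr (Or.inr (by linarith))
    linarith

lemma abs_bsA_sub_le {K v x z : ℝ} (hK : 0 < K) (hv : 0 < v) (hx : 0 < x) (hz : -1 < z) :
    |bsA K v (x * (1 + z)) - bsA K v x|
      ≤ 2 * ((√(2 * π))⁻¹ * √K) * √x * varpi z * ((1 + v⁻¹) * exp (-v / 8)) := by
  have hy : 0 < x * (1 + z) := mul_pos hx (by linarith)
  have hy_nonneg := bsA_nonneg K (v := v) hy.le
  have hx_nonneg := bsA_nonneg K (v := v) hx.le
  calc |bsA K v (x * (1 + z)) - bsA K v x| ≤ bsA K v (x * (1 + z)) + bsA K v x :=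
        abs_sub_le_iff.mpr ⟨by linarith, by linarith⟩
    _ ≤ (√(2 * π))⁻¹ * √K * √(x * (1 + z)) * ((1 + v⁻¹) * exp (-v / 8))
        + (√(2 * π))⁻¹ * √K * √x * ((1 + v⁻¹) * exp (-v / 8)) :=
        add_le_add (bsA_le hK hv hy) (bsA_le hK hv hx)
    _ = (√(2 * π))⁻¹ * √K * √x * (√(1 + z) + 1) * ((1 + v⁻¹) * exp (-v / 8)) := by
        rw [sqrt_mul hx.le]
        ring
    _ ≤ (√(2 * π))⁻¹ * √K * √x * (2 * varpi z) * ((1 + v⁻¹) * exp (-v / 8)) := by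
        gcongr
        linarith [sqrt_one_add_le_varpi hz, one_le_varpi hz]
    _ = 2 * ((√(2 * π))⁻¹ * √K) * √x * varpi z * ((1 + v⁻¹) * exp (-v / 8)) := by ring

theorem bs_A_integrated_jump_bound (K : ℝ) (hK : 0 < K) :
    ∃ C : ℝ, 0 < C ∧ ∀ lam x z : ℝ, 0 < lam → 0 < x → -1 < z →
      IntegrableOn (fun v => bsA K v (x * (1 + z)) - bsA K v x) (Set.Ioi lam) ∧
      IntegrableOn (fun v => (1 + v⁻¹) * Real.exp (-v / 8)) (Set.Ioi lam) ∧
      |∫ v in Set.Ioi lam, (bsA K v (x * (1 + z)) - bsA K v x)|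
        ≤ C * x ^ ((1 : ℝ) / 2) * varpi z
            * ∫ v in Set.Ioi lam, (1 + v⁻¹) * Real.exp (-v / 8) := by
  refine ⟨2 * ((√(2 * π))⁻¹ * √K), by positivity, fun lam x z hlam hx hz => ?_⟩
  rw [← sqrt_eq_rpow, ← integral_const_mul]
  have hweight := integrableOn_one_add_inv_mul_exp_neg_div hlam (by norm_num : (0 : ℝ) < 8)
  have hbound : ∀ᵐ v ∂volume.restrict (Set.Ioi lam),
      ‖bsA K v (x * (1 + z)) - bsA K v x‖
        ≤ 2 * ((√(2 * π))⁻¹ * √K) * √x * varpi z * ((1 + v⁻¹) * exp (-v / 8)) :=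
    (ae_restrict_mem measurableSet_Ioi).mono fun v hv => abs_bsA_sub_le hK (hlam.trans hv) hx hz
  have hcont : ContinuousOn (fun v => bsA K v (x * (1 + z)) - bsA K v x) (Set.Ioi lam) :=
    ((continuousOn_bsA K _).sub (continuousOn_bsA K x)).mono (Set.Ioi_subset_Ioi hlam.le)
  exact ⟨(hweight.const_mul _).mono' (hcont.aestronglyMeasurable measurableSet_Ioi) hbound,
    hweight, norm_integral_le_of_norm_le (hweight.const_mul _) hbound⟩
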